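/- arXiv:2004.14551 — 2 statements merged into one kernel-verified Lean document; each statement's English description precedes it below -/
import Mathlib

section
/- Let V be a finite-dimensional complex inner product space and let w1, w2 be nonzero vectors in V such that the angle between them satisfies arccos(Re⟨w1,w2⟩/(‖w1‖‖w2‖)) ≥ α for some α ∈ [0, π], and ‖w1‖/‖w2‖ ≤ L for some L ≥ 1. Then ‖w1 + w2‖ ≤ (1 − α²/(16L))‖w1‖ + ‖w2‖. -/
set_option maxHeartbeats 1000000 in
/-- strong triangle inequality for vectors with angle bounded below. -/
theorem stmt_0 {V : Type*} [NormedAddCommGroup V] [InnerProductSpace ℂ V]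
    [FiniteDimensional ℂ V] (w1 w2 : V) (hw1 : w1 ≠ 0) (hw2 : w2 ≠ 0)
    (α L : ℝ) (hα : α ∈ Set.Icc 0 Real.pi) (hL : 1 ≤ L)
    (hangle : α ≤ Real.arccos ((inner ℂ w1 w2 : ℂ).re / (‖w1‖ * ‖w2‖)))
    (hratio : ‖w1‖ / ‖w2‖ ≤ L) :
    ‖w1 + w2‖ ≤ (1 - α ^ 2 / (16 * L)) * ‖w1‖ + ‖w2‖ := by
  obtain ⟨hα0, hαπ⟩ := hα
  have ha : (0:ℝ) < ‖w1‖ := norm_pos_iff.mpr hw1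
  have hb : (0:ℝ) < ‖w2‖ := norm_pos_iff.mpr hw2
  set a := ‖w1‖
  set b := ‖w2‖
  set c := (inner ℂ w1 w2 : ℂ).re with hc
  have hab : 0 < a * b := mul_pos ha hb
  -- |c| ≤ a * b
  have hcs : |c| ≤ a * b := by
    calc |c| ≤ ‖(inner ℂ w1 w2 : ℂ)‖ := Complex.abs_re_le_norm _
    _ ≤ a * b := norm_inner_le_norm w1 w2
  have ht1 : -1 ≤ c / (a * b) := by
    rw [le_div_iff₀ hab]; nlinarith [abs_le.mp hcs]
  have ht2 : c / (a * b) ≤ 1 := by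
    rw [div_le_iff₀ hab]; nlinarith [abs_le.mp hcs]
  -- c ≤ a * b * cos α
  have hcos : c / (a * b) ≤ Real.cos α := by
    calc c / (a * b) = Real.cos (Real.arccos (c / (a * b))) :=
          (Real.cos_arccos ht1 ht2).symm
    _ ≤ Real.cos α :=
          Real.cos_le_cos_of_nonneg_of_le_pi hα0 (Real.arccos_le_pi _) hangle
  have hc_le : c ≤ a * b * Real.cos α := by
    rw [div_le_iff₀ hab] at hcos; linarith
  -- cos α ≤ 1 - 2/π² α²
  have hcosub : Real.cos α ≤ 1 - 2 / Real.pi ^ 2 * α ^ 2 :=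
    Real.cos_le_one_sub_mul_cos_sq (by rwa [abs_of_nonneg hα0])
  have hpi : (0:ℝ) < Real.pi := Real.pi_pos
  have hpi2 : Real.pi ^ 2 < 16 := by nlinarith [Real.pi_lt_d2]
  -- norm squared expansion
  have hsq : ‖w1 + w2‖ ^ 2 = a ^ 2 + 2 * c + b ^ 2 := by
    have h := norm_add_sq (𝕜 := ℂ) w1 w2
    simp only [RCLike.re_to_complex] at h
    rw [h]
  have hLpos : (0:ℝ) < L := lt_of_lt_of_le one_pos hL
  have haL : a ≤ L * b := by rw [div_le_iff₀ hb] at hratio; linarith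
  set d := α ^ 2 / (16 * L) with hd
  have hd0 : 0 ≤ d := by positivity
  have hδ : d ≤ 1 := by
    rw [hd, div_le_one (by positivity)]; nlinarith
  have hRHS : 0 ≤ (1 - d) * a + b := by nlinarith
  have h8 : α ^ 2 / 8 ≤ 2 / Real.pi ^ 2 * α ^ 2 := by
    rw [div_mul_eq_mul_div, div_le_div_iff₀ (by norm_num) (by positivity)]
    nlinarith
  have h3 : d * (a + b) ≤ b * (α ^ 2 / 8) := by
    rw [hd, div_mul_eq_mul_div, div_le_iff₀ (by positivity)]
    have e1 : α ^ 2 * a ≤ α ^ 2 * (L * b) :=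
      mul_le_mul_of_nonneg_left haL (sq_nonneg α)
    have e2 : α ^ 2 * b ≤ α ^ 2 * (L * b) :=
      mul_le_mul_of_nonneg_left (le_mul_of_one_le_left hb.le hL) (sq_nonneg α)
    nlinarith
  have hchain : 2 * d * a * (a + b) ≤ 2 * a * b * (2 / Real.pi ^ 2 * α ^ 2) := by
    calc 2 * d * a * (a + b) = 2 * a * (d * (a + b)) := by ring
    _ ≤ 2 * a * (b * (α ^ 2 / 8)) :=
        mul_le_mul_of_nonneg_left h3 (by positivity)
    _ ≤ 2 * a * (b * (2 / Real.pi ^ 2 * α ^ 2)) :=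
        mul_le_mul_of_nonneg_left (mul_le_mul_of_nonneg_left h8 hb.le) (by positivity)
    _ = 2 * a * b * (2 / Real.pi ^ 2 * α ^ 2) := by ring
  have h1 : c ≤ a * b * (1 - 2 / Real.pi ^ 2 * α ^ 2) :=
    le_trans hc_le (mul_le_mul_of_nonneg_left hcosub hab.le)
  have key : ‖w1 + w2‖ ^ 2 ≤ ((1 - d) * a + b) ^ 2 := by
    rw [hsq]; nlinarith [sq_nonneg (d * a)]
  calc ‖w1 + w2‖ = Real.sqrt (‖w1 + w2‖ ^ 2) := (Real.sqrt_sq (norm_nonneg _)).symm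
  _ ≤ Real.sqrt (((1 - d) * a + b) ^ 2) := Real.sqrt_le_sqrt key
  _ = (1 - d) * a + b := Real.sqrt_sq hRHS
end

section
/- Let 𝓛 be a positive linear operator on functions on a space U (i.e., h ≥ 0 implies 𝓛(h) ≥ 0) that satisfies the Cauchy–Schwarz-type inequality 𝓛(fg)² ≤ 𝓛(f²)·𝓛(g²) pointwise. Let β be a function with 0 ≤ β ≤ 1, and suppose there is a measurable set W and δ ∈ (0,1) such that 𝓛(β²)(u) ≤ 1 − δ for all u ∈ W. Suppose ν is a measure with 𝓛*ν = ν (that is, ∫ 𝓛(h) dν = ∫ h dν for all h), and suppose ∫_W 𝓛(h²) dν ≥ η' ∫_U 𝓛(h²) dν for some η' ∈ (0,1). Then ∫_U 𝓛(βh)² dν ≤ (1 − η'δ) ∫_U h² dν. -/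
open MeasureTheory

/-- the L² contraction step for the Dolgopyat operator: for a
positive linear transfer-type operator 𝓛 satisfying the pointwise
Cauchy–Schwarz inequality, fixing 𝓛(1) = 1 and an invariant measure ν, a
damping function β with 𝓛(β²) ≤ 1 − δ on a set W carrying an η'-fraction of
∫𝓛(h²) yields ∫ 𝓛(βh)² dν ≤ (1 − η'δ) ∫ h² dν. -/
theorem stmt_11 {α : Type*} [MeasurableSpace α]
    (L : (α → ℝ) →ₗ[ℝ] (α → ℝ))
    (hLpos : ∀ f : α → ℝ, (∀ u, 0 ≤ f u) → ∀ u, 0 ≤ L f u)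
    (hCS : ∀ f g : α → ℝ, ∀ u, (L (f * g) u) ^ 2 ≤ L (f ^ 2) u * L (g ^ 2) u)
    (hone : L (fun _ => 1) = fun _ => 1)
    (β : α → ℝ) (hβ0 : ∀ u, 0 ≤ β u) (hβ1 : ∀ u, β u ≤ 1)
    (W : Set α) (hWm : MeasurableSet W) (δ : ℝ) (hδ : δ ∈ Set.Ioo (0 : ℝ) 1)
    (hdamp : ∀ u ∈ W, L (β ^ 2) u ≤ 1 - δ)
    (ν : Measure α)
    (hinv : ∀ f : α → ℝ, ∫ u, L f u ∂ν = ∫ u, f u ∂ν)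
    (h : α → ℝ) (η' : ℝ) (hη' : η' ∈ Set.Ioo (0 : ℝ) 1)
    (hintLh : Integrable (fun u => L (h ^ 2) u) ν)
    (hintLβh : Integrable (fun u => (L (β * h) u) ^ 2) ν)
    (hfrac : η' * ∫ u, L (h ^ 2) u ∂ν ≤ ∫ u in W, L (h ^ 2) u ∂ν) :
    ∫ u, (L (β * h) u) ^ 2 ∂ν ≤ (1 - η' * δ) * ∫ u, (h u) ^ 2 ∂ν := by

  obtain ⟨hδ0, hδ1⟩ := hδ
  obtain ⟨hη0, hη1⟩ := hη'
  -- nonnegativity of L (h^2)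
  have hLh2 : ∀ u, 0 ≤ L (h ^ 2) u := by
    intro u
    exact hLpos _ (fun v => by simpa using sq_nonneg (h v)) u
  -- L (β^2) ≤ 1 pointwise
  have hLβ2 : ∀ u, L (β ^ 2) u ≤ 1 := by
    intro u
    have h0 : ∀ v, 0 ≤ (((fun _ => (1:ℝ)) : α → ℝ) - β ^ 2) v := by
      intro v
      have : β v ^ 2 ≤ 1 := by nlinarith [hβ0 v, hβ1 v]
      simpa using sub_nonneg.mpr this
    have := hLpos _ h0 u
    rw [map_sub, hone] at this
    simpa [sub_nonneg] using this
  -- pointwise bounds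
  have hptW : ∀ u ∈ W, (L (β * h) u) ^ 2 ≤ (1 - δ) * L (h ^ 2) u := by
    intro u hu
    calc (L (β * h) u) ^ 2 ≤ L (β ^ 2) u * L (h ^ 2) u := hCS β h u
      _ ≤ (1 - δ) * L (h ^ 2) u := mul_le_mul_of_nonneg_right (hdamp u hu) (hLh2 u)
  have hpt : ∀ u, (L (β * h) u) ^ 2 ≤ L (h ^ 2) u := by
    intro u
    calc (L (β * h) u) ^ 2 ≤ L (β ^ 2) u * L (h ^ 2) u := hCS β h u
      _ ≤ 1 * L (h ^ 2) u := mul_le_mul_of_nonneg_right (hLβ2 u) (hLh2 u)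
      _ = L (h ^ 2) u := one_mul _
  set I := ∫ u, L (h ^ 2) u ∂ν with hI
  have hI0 : 0 ≤ I := integral_nonneg hLh2
  -- split the integral
  have hsplit : ∫ u, (L (β * h) u) ^ 2 ∂ν
      = (∫ u in W, (L (β * h) u) ^ 2 ∂ν) + ∫ u in Wᶜ, (L (β * h) u) ^ 2 ∂ν :=
    (integral_add_compl hWm hintLβh).symm
  have hsplit2 : I = (∫ u in W, L (h ^ 2) u ∂ν) + ∫ u in Wᶜ, L (h ^ 2) u ∂ν :=
    (integral_add_compl hWm hintLh).symm
  have hW : ∫ u in W, (L (β * h) u) ^ 2 ∂ν ≤ (1 - δ) * ∫ u in W, L (h ^ 2) u ∂ν := by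
    rw [← integral_const_mul]
    exact setIntegral_mono_on hintLβh.integrableOn
      ((hintLh.integrableOn).const_mul _) hWm hptW
  have hWc : ∫ u in Wᶜ, (L (β * h) u) ^ 2 ∂ν ≤ ∫ u in Wᶜ, L (h ^ 2) u ∂ν :=
    setIntegral_mono_on hintLβh.integrableOn hintLh.integrableOn hWm.compl
      (fun u _ => hpt u)
  have key : ∫ u, (L (β * h) u) ^ 2 ∂ν ≤ I - δ * ∫ u in W, L (h ^ 2) u ∂ν := by
    rw [hsplit, hsplit2]
    have := add_le_add hW hWc
    linarith
  have hfrac' : δ * (η' * I) ≤ δ * ∫ u in W, L (h ^ 2) u ∂ν :=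
    mul_le_mul_of_nonneg_left hfrac (le_of_lt hδ0)
  have hIh : I = ∫ u, (h u) ^ 2 ∂ν := by
    rw [hI, hinv (h ^ 2)]
    simp [Pi.pow_apply]
  calc ∫ u, (L (β * h) u) ^ 2 ∂ν ≤ I - δ * ∫ u in W, L (h ^ 2) u ∂ν := key
    _ ≤ I - δ * (η' * I) := by linarith
    _ = (1 - η' * δ) * ∫ u, (h u) ^ 2 ∂ν := by rw [← hIh]; ring
end
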